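/- Every graph in the family 𝓕' is 2-γ'MB-critical; that is, for all integers s, q, m ≥ 2, the graph F'_{s,q,m} is 2-γ'MB-critical. -/
import Mathlib


/-- `D` is a dominating set of `G`: every vertex not in `D` has a neighbor in `D`. -/
def Dominating {V : Type*} (G : SimpleGraph V) (D : Set V) : Prop :=
  ∀ v, v ∉ D → ∃ d ∈ D, G.Adj d v

/-- Dominator wins the S-game on `G` within one move. -/
def WinsWithin1 {V : Type*} (G : SimpleGraph V) : Prop :=
  ∀ s₁ : V, ∃ d₁, d₁ ≠ s₁ ∧ Dominating G {d₁}

/-- Dominator wins the S-game on `G` within two moves. -/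
def WinsWithin2 {V : Type*} (G : SimpleGraph V) : Prop :=
  ∀ s₁ : V, ∃ d₁, d₁ ≠ s₁ ∧
    (Dominating G {d₁} ∨
      ∀ s₂, s₂ ∉ ({s₁, d₁} : Set V) →
        ∃ d₂, d₂ ∉ ({s₁, d₁, s₂} : Set V) ∧ Dominating G {d₁, d₂})

/-- `γ'MB(G) = 2`: Dominator wins the S-game within two moves but not within one. -/
def MBPrimeEqTwo {V : Type*} (G : SimpleGraph V) : Prop :=
  WinsWithin2 G ∧ ¬ WinsWithin1 G

/-- `G` is `2`-`γ'MB`-critical: `γ'MB(G) = 2` and for every edge `e`, Dominator does not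
win the S-game on `G - e` within two moves. -/
def Critical2 {V : Type*} (G : SimpleGraph V) : Prop :=
  MBPrimeEqTwo G ∧ ∀ u v : V, G.Adj u v → ¬ WinsWithin2 (G.deleteEdges {s(u, v)})

/-- The graph `H_m`, the join of `K₂` with the complement of `K_{m-2}`: the first two
vertices are adjacent to everything, the remaining vertices form an independent set.
(`H₀` is the null graph, `H₂ = K₂`.) -/
def HGraph (m : ℕ) : SimpleGraph (Fin m) :=
  SimpleGraph.fromRel (fun u _ => u.val < 2)

/-- Vertex type of `F'_{s,q,m}`: the part `{a, b}` of `K_{2,s}` (`a = inl (inl 0)`,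
`b = inl (inl 1)`), the `s`-part of `K_{2,s}`, the `q - 2` vertices `b₁, …, b_{q-2}`,
the vertex `v₁ = inr (inl ())`, the copy of `H_m`, and the vertex `x = inr (inr (inr ()))`. -/
abbrev F'Vert (s q m : ℕ) : Type :=
  (Fin 2 ⊕ (Fin s ⊕ Fin (q - 2))) ⊕ (Unit ⊕ (Fin m ⊕ Unit))

/-- The graph `F'_{s,q,m}`. -/
def F'Graph (s q m : ℕ) : SimpleGraph (F'Vert s q m) :=
  SimpleGraph.fromRel (fun u v =>
    match u, v with
    | .inl (.inl _), .inl (.inr (.inl _)) => True        -- {a, b} to the s-part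
    | .inr (.inl _), .inl _ => True                      -- v₁ to all of P
    | .inr (.inr (.inl h)), .inr (.inr (.inl _)) => h.val < 2  -- inside H_m
    | .inr (.inr (.inr _)), .inr (.inr (.inl _)) => True -- x to H_m
    | .inr (.inr (.inr _)), .inl (.inl _) => True        -- x to {a, b}
    | .inr (.inr (.inr _)), .inl (.inr (.inr _)) => True -- x to the bᵢ's
    | _, _ => False)

namespace F'Crit

variable {s q m : ℕ}

abbrev vab (i : Fin 2) : F'Vert s q m := .inl (.inl i)
abbrev vA (j : Fin s) : F'Vert s q m := .inl (.inr (.inl j))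
abbrev vB (j : Fin (q - 2)) : F'Vert s q m := .inl (.inr (.inr j))
abbrev vv : F'Vert s q m := .inr (.inl ())
abbrev vH (k : Fin m) : F'Vert s q m := .inr (.inr (.inl k))
abbrev vx : F'Vert s q m := .inr (.inr (.inr ()))

/-! Positive adjacency facts -/

lemma adj_vv_inl (c : Fin 2 ⊕ (Fin s ⊕ Fin (q - 2))) :
    (F'Graph s q m).Adj vv (.inl c) := by
  simp [F'Graph, SimpleGraph.fromRel_adj]

lemma adj_vx_ab (i : Fin 2) : (F'Graph s q m).Adj vx (vab i) := by
  simp [F'Graph, SimpleGraph.fromRel_adj]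

lemma adj_vx_B (j : Fin (q - 2)) : (F'Graph s q m).Adj vx (vB j) := by
  simp [F'Graph, SimpleGraph.fromRel_adj]

lemma adj_vx_H (k : Fin m) : (F'Graph s q m).Adj vx (vH k) := by
  simp [F'Graph, SimpleGraph.fromRel_adj]

lemma adj_ab_A (i : Fin 2) (j : Fin s) : (F'Graph s q m).Adj (vab i) (vA j) := by
  simp [F'Graph, SimpleGraph.fromRel_adj]

lemma adj_H_iff (k l : Fin m) :
    (F'Graph s q m).Adj (vH k) (vH l) ↔ k ≠ l ∧ (k.val < 2 ∨ l.val < 2) := by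
  simp [F'Graph, SimpleGraph.fromRel_adj]

/-! Negative adjacency facts -/

lemma not_adj_vx_A (j : Fin s) : ¬ (F'Graph s q m).Adj vx (vA j) := by
  simp [F'Graph, SimpleGraph.fromRel_adj]

lemma not_adj_vv_H (k : Fin m) : ¬ (F'Graph s q m).Adj vv (vH k) := by
  simp [F'Graph, SimpleGraph.fromRel_adj]

lemma not_adj_H_inl (k : Fin m) (c : Fin 2 ⊕ (Fin s ⊕ Fin (q - 2))) :
    ¬ (F'Graph s q m).Adj (vH k) (.inl c) := by
  rcases c with i | j | j <;> simp [F'Graph, SimpleGraph.fromRel_adj]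

lemma not_adj_ab_ab (i i' : Fin 2) : ¬ (F'Graph s q m).Adj (vab i) (vab i') := by
  simp [F'Graph, SimpleGraph.fromRel_adj]

lemma not_adj_ab_B (i : Fin 2) (j : Fin (q - 2)) :
    ¬ (F'Graph s q m).Adj (vab i) (vB j) := by
  simp [F'Graph, SimpleGraph.fromRel_adj]

/-! Neighborhood characterizations -/

lemma adj_to_A {d : F'Vert s q m} (j : Fin s) (h : (F'Graph s q m).Adj d (vA j)) :
    (∃ i, d = vab i) ∨ d = vv := by
  rcases d with (i | j' | j') | (⟨⟩ | k | ⟨⟩) <;>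
    simp_all [F'Graph, SimpleGraph.fromRel_adj]

lemma adj_to_ab {d : F'Vert s q m} (i : Fin 2) (h : (F'Graph s q m).Adj d (vab i)) :
    (∃ j, d = vA j) ∨ d = vv ∨ d = vx := by
  rcases d with (i' | j' | j') | (⟨⟩ | k | ⟨⟩) <;>
    simp_all [F'Graph, SimpleGraph.fromRel_adj]

lemma adj_to_B {d : F'Vert s q m} (j : Fin (q - 2)) (h : (F'Graph s q m).Adj d (vB j)) :
    d = vv ∨ d = vx := by
  rcases d with (i' | j' | j') | (⟨⟩ | k | ⟨⟩) <;>
    simp_all [F'Graph, SimpleGraph.fromRel_adj]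

lemma adj_to_H {d : F'Vert s q m} (k : Fin m) (h : (F'Graph s q m).Adj d (vH k)) :
    (∃ l, d = vH l ∧ l ≠ k ∧ (l.val < 2 ∨ k.val < 2)) ∨ d = vx := by
  rcases d with (i' | j' | j') | (⟨⟩ | l | ⟨⟩) <;>
    simp_all [F'Graph, SimpleGraph.fromRel_adj]

/-! Generic helpers -/

lemma dom_mono {V : Type*} {G : SimpleGraph V} {E : Set (Sym2 V)} {D : Set V}
    (h : Dominating (G.deleteEdges E) D) : Dominating G D := by
  intro v hv
  obtain ⟨d, hd, ha⟩ := h v hv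
  exact ⟨d, hd, (SimpleGraph.deleteEdges_adj.1 ha).1⟩

lemma not_adj_del₁ {V : Type*} {G : SimpleGraph V} {e : Sym2 V} {p w : V}
    (h : ¬ G.Adj p w) : ¬ (G.deleteEdges {e}).Adj p w := by
  intro ha
  exact h (SimpleGraph.deleteEdges_adj.1 ha).1

lemma not_adj_del₂ {V : Type*} {G : SimpleGraph V} {e : Sym2 V} {p w : V}
    (h : s(p, w) = e) : ¬ (G.deleteEdges {e}).Adj p w := by
  intro ha
  exact (SimpleGraph.deleteEdges_adj.1 ha).2 (by simp [h])

lemma not_dom_pair {V : Type*} {G' : SimpleGraph V} {p₁ p₂ w : V} (h1 : w ≠ p₁) (h2 : w ≠ p₂)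
    (ha1 : ¬ G'.Adj p₁ w) (ha2 : ¬ G'.Adj p₂ w) : ¬ Dominating G' {p₁, p₂} := by
  intro hd
  obtain ⟨d, hd', ha⟩ := hd w (by simp [h1, h2])
  rcases hd' with rfl | rfl
  · exact ha1 ha
  · exact ha2 (by simpa using ha)

/-! No single vertex dominates -/

lemma noDom1 (hs : 2 ≤ s) (hm : 2 ≤ m) (d : F'Vert s q m) :
    ¬ Dominating (F'Graph s q m) {d} := by
  intro hd
  set A0 : F'Vert s q m := vA ⟨0, by omega⟩ with hA0
  set h0 : F'Vert s q m := vH ⟨0, by omega⟩ with hh0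
  by_cases hdA : d = A0
  · obtain ⟨d', hd', ha⟩ := hd h0 (by simp [hdA, hh0, hA0])
    rw [Set.mem_singleton_iff] at hd'
    subst hd'
    rcases adj_to_H _ ha with ⟨l, hl, _⟩ | hx
    · simp [hdA, hA0] at hl
    · simp [hdA, hA0] at hx
  · obtain ⟨d', hd', ha⟩ := hd A0 (by simp only [Set.mem_singleton_iff]; exact fun h => hdA h.symm)
    rw [Set.mem_singleton_iff] at hd'
    subst hd'
    have hmem : h0 ∉ ({d'} : Set (F'Vert s q m)) := by
      rw [Set.mem_singleton_iff]
      intro hcon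
      rw [← hcon] at ha
      rcases adj_to_A _ ha with ⟨i, hl⟩ | hl <;> simp_all [hh0, hA0]
    obtain ⟨d'', hd'', ha2⟩ := hd h0 hmem
    rw [Set.mem_singleton_iff] at hd''
    subst hd''
    rcases adj_to_A _ ha with ⟨i, rfl⟩ | rfl <;>
      rcases adj_to_H _ ha2 with ⟨l, hl, _⟩ | hx <;> simp_all

/-! Characterization of dominating pairs -/

def Shape (d₁ d₂ : F'Vert s q m) : Prop :=
  (∃ i : Fin 2, d₁ = vab i ∧ d₂ = vx) ∨ (d₁ = vv ∧ d₂ = vx) ∨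
    (d₁ = vv ∧ ∃ k : Fin m, d₂ = vH k ∧ (k.val < 2 ∨ m ≤ 3))

lemma pair_aux (hm : 2 ≤ m) {d₁ d₂ : F'Vert s q m}
    (hd : Dominating (F'Graph s q m) {d₁, d₂})
    (h1 : (∃ i, d₁ = vab i) ∨ d₁ = vv)
    (h2 : (∃ k, d₂ = vH k) ∨ d₂ = vx) : Shape d₁ d₂ := by
  rcases h1 with ⟨i, rfl⟩ | rfl
  · -- d₁ = vab i; show d₂ = vx
    have hx : d₂ = vx := by
      have hne : (vab ⟨1 - i.val, by omega⟩ : F'Vert s q m) ≠ vab i := by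
        simp only [vab, Sum.inl.injEq, ne_eq]
        intro h
        have := Fin.mk.inj_iff.1 h
        omega
      have hmem : (vab ⟨1 - i.val, by omega⟩ : F'Vert s q m) ∉ ({vab i, d₂} : Set (F'Vert s q m)) := by
        simp only [Set.mem_insert_iff, Set.mem_singleton_iff]
        push_neg
        refine ⟨hne, ?_⟩
        rcases h2 with ⟨k, rfl⟩ | rfl <;> simp
      obtain ⟨d', hd', ha⟩ := hd (vab ⟨1 - i.val, by omega⟩) hmem
      rcases hd' with rfl | rfl
      · rcases adj_to_ab _ ha with ⟨j, hj⟩ | hj | hj <;> simp_all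
      · rcases adj_to_ab _ ha with ⟨j, hj⟩ | hj | hj <;>
          rcases h2 with ⟨k, rfl⟩ | rfl <;> simp_all
    exact Or.inl ⟨i, rfl, hx⟩
  · rcases h2 with ⟨k, rfl⟩ | rfl
    · refine Or.inr (Or.inr ⟨rfl, k, rfl, ?_⟩)
      by_contra hcon
      push_neg at hcon
      obtain ⟨hk2, hm4⟩ := hcon
      set l : Fin m := if hk : k.val = 2 then ⟨3, by omega⟩ else ⟨2, by omega⟩ with hl
      have hlk : l ≠ k := by
        rcases Nat.decEq k.val 2 with h | h <;>
          simp only [hl, h, dite_true, dite_false, ne_eq, Fin.mk.injEq] <;>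
          · intro hc
            rw [Fin.ext_iff] at hc
            simp_all <;> omega
      have hl2 : 2 ≤ l.val := by
        rcases Nat.decEq k.val 2 with h | h <;> simp [hl, h]
      obtain ⟨d', hd', ha⟩ := hd (vH l) (by simp [hlk])
      rcases hd' with rfl | rfl
      · exact not_adj_vv_H l ha
      · rw [adj_H_iff] at ha
        omega
    · exact Or.inr (Or.inl ⟨rfl, rfl⟩)

lemma pairChar (hs : 2 ≤ s) (hm : 2 ≤ m) {d₁ d₂ : F'Vert s q m}
    (hd : Dominating (F'Graph s q m) {d₁, d₂}) :
    Shape d₁ d₂ ∨ Shape d₂ d₁ := by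
  have hA : ∀ j : Fin s, (vA j : F'Vert s q m) ∈ ({d₁, d₂} : Set _) ∨
      (∃ i, d₁ = vab i) ∨ d₁ = vv ∨ (∃ i, d₂ = vab i) ∨ d₂ = vv := by
    intro j
    by_cases hj : (vA j : F'Vert s q m) ∈ ({d₁, d₂} : Set _)
    · exact Or.inl hj
    · obtain ⟨d', hd', ha⟩ := hd (vA j) hj
      rcases hd' with rfl | rfl
      · rcases adj_to_A _ ha with ⟨i, hi⟩ | hi
        · exact Or.inr (Or.inl ⟨i, hi⟩)
        · exact Or.inr (Or.inr (Or.inl hi))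
      · rcases adj_to_A _ ha with ⟨i, hi⟩ | hi
        · exact Or.inr (Or.inr (Or.inr (Or.inl ⟨i, hi⟩)))
        · exact Or.inr (Or.inr (Or.inr (Or.inr hi)))
  -- step 1 : one of d₁, d₂ is in {a, b, v₁}
  have step1 : ((∃ i, d₁ = vab i) ∨ d₁ = vv) ∨ (∃ i, d₂ = vab i) ∨ d₂ = vv := by
    by_contra hcon
    push_neg at hcon
    have m0 := hA ⟨0, by omega⟩
    have m1 := hA ⟨1, by omega⟩
    simp only [Set.mem_insert_iff, Set.mem_singleton_iff] at m0 m1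
    have e0 : (vA ⟨0, by omega⟩ : F'Vert s q m) = d₁ ∨ (vA ⟨0, by omega⟩ : F'Vert s q m) = d₂ := by tauto
    have e1 : (vA ⟨1, by omega⟩ : F'Vert s q m) = d₁ ∨ (vA ⟨1, by omega⟩ : F'Vert s q m) = d₂ := by tauto
    have hne : (vA ⟨0, by omega⟩ : F'Vert s q m) ≠ vA ⟨1, by omega⟩ := by simp
    have hmem : (vH ⟨0, by omega⟩ : F'Vert s q m) ∉ ({d₁, d₂} : Set (F'Vert s q m)) := by
      simp only [Set.mem_insert_iff, Set.mem_singleton_iff]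
      push_neg
      constructor
      · rcases e0 with h0 | h0
        · rw [← h0]; simp
        · rcases e1 with h1 | h1
          · rw [← h1]; simp
          · exact absurd (h1.trans h0.symm) hne.symm
      · rcases e1 with h1 | h1
        · rcases e0 with h0 | h0
          · exact absurd (h0.trans h1.symm) hne
          · rw [← h0]; simp
        · rw [← h1]; simp
    obtain ⟨d', hd', ha⟩ := hd (vH ⟨0, by omega⟩) hmem
    rcases hd' with rfl | rfl <;>
      rcases adj_to_H _ ha with ⟨l, hl, _⟩ | hx <;>
        rcases e0 with h0 | h0 <;> rcases e1 with h1 | h1 <;> simp_all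
  -- step 2 : one of d₁, d₂ is in H ∪ {x}
  have step2 : ((∃ k, d₁ = vH k) ∨ d₁ = vx) ∨ (∃ k, d₂ = vH k) ∨ d₂ = vx := by
    by_cases hh : (vH ⟨0, by omega⟩ : F'Vert s q m) ∈ ({d₁, d₂} : Set _)
    · simp only [Set.mem_insert_iff, Set.mem_singleton_iff] at hh
      rcases hh with h | h
      · exact Or.inl (Or.inl ⟨_, h.symm⟩)
      · exact Or.inr (Or.inl ⟨_, h.symm⟩)
    · obtain ⟨d', hd', ha⟩ := hd _ hh
      rcases hd' with rfl | rfl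
      · rcases adj_to_H _ ha with ⟨l, hl, _⟩ | hx
        · exact Or.inl (Or.inl ⟨l, hl⟩)
        · exact Or.inl (Or.inr hx)
      · rcases adj_to_H _ ha with ⟨l, hl, _⟩ | hx
        · exact Or.inr (Or.inl ⟨l, hl⟩)
        · exact Or.inr (Or.inr hx)
  rcases step1 with h1 | h1 <;> rcases step2 with h2 | h2
  · -- d₁ in both classes : impossible
    exfalso
    rcases h1 with ⟨i, rfl⟩ | rfl <;> rcases h2 with ⟨k, hk⟩ | hk <;> simp_all
  · exact Or.inl (pair_aux hm hd h1 h2)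
  · refine Or.inr (pair_aux hm ?_ h1 h2)
    rwa [Set.pair_comm] at hd
  · exfalso
    rcases h1 with ⟨i, rfl⟩ | rfl <;> rcases h2 with ⟨k, hk⟩ | hk <;> simp_all

/-! Dominating pairs : sufficiency -/

lemma dom_x_v : Dominating (F'Graph s q m) {vx, vv} := by
  intro v hv
  rcases v with c | (⟨⟩ | k | ⟨⟩)
  · exact ⟨vv, by simp, adj_vv_inl c⟩
  · exact absurd (by simp : (vv : F'Vert s q m) ∈ ({vx, vv} : Set _)) hv
  · exact ⟨vx, by simp, adj_vx_H k⟩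
  · exact absurd (by simp : (vx : F'Vert s q m) ∈ ({vx, vv} : Set _)) hv

lemma dom_x_ab (i : Fin 2) : Dominating (F'Graph s q m) {vx, vab i} := by
  intro v hv
  rcases v with (i' | j | j) | (⟨⟩ | k | ⟨⟩)
  · exact ⟨vx, by simp, adj_vx_ab i'⟩
  · exact ⟨vab i, by simp, adj_ab_A i j⟩
  · exact ⟨vx, by simp, adj_vx_B j⟩
  · exact ⟨vab i, by simp, (adj_vv_inl (.inl i)).symm⟩
  · exact ⟨vx, by simp, adj_vx_H k⟩
  · exact absurd (by simp : (vx : F'Vert s q m) ∈ ({vx, vab i} : Set _)) hv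

lemma dom_v_H (k : Fin m) (hk : k.val < 2) : Dominating (F'Graph s q m) {vv, vH k} := by
  intro v hv
  rcases v with c | (⟨⟩ | l | ⟨⟩)
  · exact ⟨vv, by simp, adj_vv_inl c⟩
  · exact absurd (by simp : (vv : F'Vert s q m) ∈ ({vv, vH k} : Set _)) hv
  · refine ⟨vH k, by simp, (adj_H_iff k l).2 ⟨?_, Or.inl hk⟩⟩
    intro h
    exact hv (by simp [h])
  · exact ⟨vH k, by simp, (adj_vx_H k).symm⟩

/-! Dominator wins within two moves -/

lemma win2 (hm : 2 ≤ m) : WinsWithin2 (F'Graph s q m) := by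
  intro s₁
  by_cases hx : s₁ = vx
  · refine ⟨vv, by simp [hx], Or.inr ?_⟩
    intro s₂ hs₂
    simp only [Set.mem_insert_iff, Set.mem_singleton_iff, hx] at hs₂
    push_neg at hs₂
    by_cases h0 : s₂ = vH ⟨0, by omega⟩
    · refine ⟨vH ⟨1, by omega⟩, ?_, dom_v_H _ (by simp)⟩
      simp only [Set.mem_insert_iff, Set.mem_singleton_iff, hx, h0]
      push_neg
      exact ⟨by simp, by simp, by simp⟩
    · refine ⟨vH ⟨0, by omega⟩, ?_, dom_v_H _ (by simp)⟩
      simp only [Set.mem_insert_iff, Set.mem_singleton_iff, hx]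
      push_neg
      exact ⟨by simp, by simp, fun h => h0 h.symm⟩
  · refine ⟨vx, fun h => hx h.symm, Or.inr ?_⟩
    intro s₂ hs₂
    simp only [Set.mem_insert_iff, Set.mem_singleton_iff] at hs₂
    push_neg at hs₂
    obtain ⟨hs21, hs2x⟩ := hs₂
    by_cases hv1 : (vv : F'Vert s q m) = s₁ ∨ (vv : F'Vert s q m) = s₂
    · by_cases ha : (vab 0 : F'Vert s q m) = s₁ ∨ (vab 0 : F'Vert s q m) = s₂
      · refine ⟨vab 1, ?_, dom_x_ab 1⟩
        simp only [Set.mem_insert_iff, Set.mem_singleton_iff]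
        push_neg
        refine ⟨?_, by simp, ?_⟩ <;>
          · intro h1
            subst h1
            rcases hv1 with h | h <;> rcases ha with h' | h' <;>
              first
              | exact absurd (h'.trans h.symm) (by simp)
              | simp_all [Fin.ext_iff]
      · push_neg at ha
        refine ⟨vab 0, ?_, dom_x_ab 0⟩
        simp only [Set.mem_insert_iff, Set.mem_singleton_iff]
        push_neg
        exact ⟨ha.1, by simp, ha.2⟩
    · push_neg at hv1
      refine ⟨vv, ?_, dom_x_v⟩
      simp only [Set.mem_insert_iff, Set.mem_singleton_iff]
      push_neg
      exact ⟨hv1.1, by simp, hv1.2⟩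

/-! Staller core lemma -/

lemma staller (hs : 2 ≤ s) (hm : 2 ≤ m) (e : Sym2 (F'Vert s q m))
    (s₁ t w : F'Vert s q m) (hts : t ≠ s₁) (hws : w ≠ s₁) (hwt : w ≠ t)
    (hC : ∀ d₁ d₂ : F'Vert s q m, d₁ ≠ s₁ → d₂ ≠ s₁ → d₂ ≠ d₁ →
      Dominating ((F'Graph s q m).deleteEdges {e}) {d₁, d₂} →
      (d₁ = t ∧ d₂ = w) ∨ (d₁ = w ∧ d₂ = t)) :
    ¬ WinsWithin2 ((F'Graph s q m).deleteEdges {e}) := by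
  intro hwin
  obtain ⟨d₁, hd₁, hcase⟩ := hwin s₁
  rcases hcase with h1 | h2
  · exact noDom1 hs hm d₁ (dom_mono h1)
  · set s₂ : F'Vert s q m := if d₁ = t then w else t with hs₂def
    have hs₂ : s₂ ∉ ({s₁, d₁} : Set (F'Vert s q m)) := by
      simp only [Set.mem_insert_iff, Set.mem_singleton_iff]
      push_neg
      by_cases hdt : d₁ = t
      · simp only [hs₂def, hdt, if_true]
        exact ⟨hws, hwt⟩
      · simp only [hs₂def, hdt, if_false]
        exact ⟨hts, fun h => hdt h.symm⟩
    obtain ⟨d₂, hd₂, hdom⟩ := h2 s₂ hs₂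
    simp only [Set.mem_insert_iff, Set.mem_singleton_iff] at hd₂
    push_neg at hd₂
    obtain ⟨hd₂s₁, hd₂d₁, hd₂s₂⟩ := hd₂
    rcases hC d₁ d₂ hd₁ hd₂s₁ hd₂d₁ hdom with ⟨hdt, hdw⟩ | ⟨hdw, hdt⟩
    · exact hd₂s₂ (by rw [hs₂def, if_pos hdt, hdw])
    · refine hd₂s₂ ?_
      rw [hs₂def, if_neg (fun h => hwt (hdw.symm.trans h)), hdt]

lemma not_adj_ab_H (i : Fin 2) (k : Fin m) : ¬ (F'Graph s q m).Adj (vab i) (vH k) := by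
  simp [F'Graph, SimpleGraph.fromRel_adj]

lemma vH_inj {k l : Fin m} : (vH k : F'Vert s q m) = vH l ↔ k = l := by simp

lemma vab_inj {i i' : Fin 2} : (vab i : F'Vert s q m) = vab i' ↔ i = i' := by simp

lemma notWin1 (hs : 2 ≤ s) (hm : 2 ≤ m) : ¬ WinsWithin1 (F'Graph s q m) := by
  intro h
  obtain ⟨d₁, _, hdom⟩ := h vx
  exact noDom1 hs hm d₁ hdom

/-! The six edge classes -/

lemma crit_abA (hs : 2 ≤ s) (hm : 2 ≤ m) (i : Fin 2) (j : Fin s) :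
    ¬ WinsWithin2 ((F'Graph s q m).deleteEdges {s((vab i : F'Vert s q m), vA j)}) := by
  refine staller hs hm _ vv vx (vab ⟨1 - i.val, by omega⟩) (by simp) (by simp) (by simp) ?_
  intro d₁ d₂ h1 h2 h12 hdom
  have hkill : ¬ Dominating ((F'Graph s q m).deleteEdges {s((vab i : F'Vert s q m), vA j)})
      {vab i, vx} :=
    not_dom_pair (by simp) (by simp) (not_adj_del₂ rfl) (not_adj_del₁ (not_adj_vx_A j))
  have hother : ∀ i' : Fin 2, i' ≠ i → (vab i' : F'Vert s q m) = vab ⟨1 - i.val, by omega⟩ := by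
    intro i' hii
    rw [vab_inj]
    have h1 : i'.val ≠ i.val := fun h => hii (Fin.ext h)
    have h2 := i'.isLt
    have h3 := i.isLt
    rw [Fin.ext_iff]
    show i'.val = 1 - i.val
    omega
  rcases pairChar hs hm (dom_mono hdom) with hS | hS <;>
    rcases hS with ⟨i', rfl, rfl⟩ | ⟨rfl, rfl⟩ | ⟨rfl, k', rfl, hcond⟩
  · by_cases hii : i' = i
    · subst hii; exact absurd hdom hkill
    · exact Or.inr ⟨hother i' hii, rfl⟩
  · exact absurd rfl h1
  · exact absurd rfl h1
  · by_cases hii : i' = i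
    · subst hii
      rw [Set.pair_comm] at hdom
      exact absurd hdom hkill
    · exact Or.inl ⟨rfl, hother i' hii⟩
  · exact absurd rfl h2
  · exact absurd rfl h2

lemma crit_vinl (hs : 2 ≤ s) (hm : 2 ≤ m) (c : Fin 2 ⊕ (Fin s ⊕ Fin (q - 2))) :
    ¬ WinsWithin2 ((F'Graph s q m).deleteEdges {s((vv : F'Vert s q m), .inl c)}) := by
  refine staller hs hm _ vx vv (vab 0) (by simp) (by simp) (by simp) ?_
  intro d₁ d₂ h1 h2 h12 hdom
  have hkill : ∀ k' : Fin m,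
      ¬ Dominating ((F'Graph s q m).deleteEdges {s((vv : F'Vert s q m), .inl c)})
      {vv, vH k'} := by
    intro k'
    exact not_dom_pair (by simp) (by simp) (not_adj_del₂ rfl)
      (not_adj_del₁ (not_adj_H_inl k' c))
  rcases pairChar hs hm (dom_mono hdom) with hS | hS <;>
    rcases hS with ⟨i', rfl, rfl⟩ | ⟨rfl, rfl⟩ | ⟨rfl, k', rfl, hcond⟩
  · exact absurd rfl h2
  · exact absurd rfl h2
  · exact absurd hdom (hkill k')
  · exact absurd rfl h1
  · exact absurd rfl h1
  · rw [Set.pair_comm] at hdom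
    exact absurd hdom (hkill k')

lemma crit_HH (hs : 2 ≤ s) (hm : 2 ≤ m) (k l : Fin m) (hk : k.val < 2) (hkl : k ≠ l) :
    ¬ WinsWithin2 ((F'Graph s q m).deleteEdges {s((vH k : F'Vert s q m), vH l)}) := by
  have hm' : 0 < m := by omega
  set jst : Fin m := if l.val < 2 then (if h3 : 3 ≤ m then ⟨2, h3⟩ else ⟨0, hm'⟩)
    else ⟨1 - k.val, by omega⟩ with hjst
  refine staller hs hm _ vx vv (vH jst) (by simp) (by simp) (by simp) ?_
  intro d₁ d₂ h1 h2 h12 hdom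
  have key : ∀ j' : Fin m, (j'.val < 2 ∨ m ≤ 3) →
      Dominating ((F'Graph s q m).deleteEdges {s((vH k : F'Vert s q m), vH l)})
        {vv, vH j'} → j' = jst := by
    intro j' hcond hdom'
    have hjk : j' ≠ k := by
      rintro rfl
      refine not_dom_pair (p₁ := (vv : F'Vert s q m)) (p₂ := vH j') (w := vH l)
        (by simp) (by rw [Ne, vH_inj]; exact hkl.symm)
        (not_adj_del₁ (not_adj_vv_H l)) (not_adj_del₂ rfl) hdom'
    have hjl : j' ≠ l := by
      rintro rfl
      refine not_dom_pair (p₁ := (vv : F'Vert s q m)) (p₂ := vH j') (w := vH k)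
        (by simp) (by rw [Ne, vH_inj]; exact hkl)
        (not_adj_del₁ (not_adj_vv_H k)) (not_adj_del₂ Sym2.eq_swap) hdom'
    have hjkv : j'.val ≠ k.val := fun h => hjk (Fin.ext h)
    have hjlv : j'.val ≠ l.val := fun h => hjl (Fin.ext h)
    by_cases hl2 : l.val < 2
    · have hj2 : 2 ≤ j'.val := by omega
      have hm3 : m = 3 := by
        rcases hcond with h | h
        · omega
        · have := j'.isLt; omega
      have hj2' : j'.val = 2 := by have := j'.isLt; omega
      rw [hjst, if_pos hl2, dif_pos (by omega : 3 ≤ m)]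
      exact Fin.ext (by simp [hj2'])
    · have hj2 : j'.val < 2 := by
        by_contra hcon
        push_neg at hcon
        refine not_dom_pair (p₁ := (vv : F'Vert s q m)) (p₂ := vH j') (w := vH l)
          (by simp) (by rw [Ne, vH_inj]; exact hjl.symm)
          (not_adj_del₁ (not_adj_vv_H l))
          (not_adj_del₁ (fun hadj => by rw [adj_H_iff] at hadj; omega)) hdom'
      rw [hjst, if_neg hl2]
      exact Fin.ext (by simp; omega)
  rcases pairChar hs hm (dom_mono hdom) with hS | hS <;>
    rcases hS with ⟨i', rfl, rfl⟩ | ⟨rfl, rfl⟩ | ⟨rfl, k', rfl, hcond⟩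
  · exact absurd rfl h2
  · exact absurd rfl h2
  · exact Or.inl ⟨rfl, by rw [vH_inj]; exact key k' hcond hdom⟩
  · exact absurd rfl h1
  · exact absurd rfl h1
  · have hk' := key k' hcond (by rwa [Set.pair_comm] at hdom)
    exact Or.inr ⟨by rw [vH_inj]; exact hk', rfl⟩

lemma crit_xH (hs : 2 ≤ s) (hm : 2 ≤ m) (k : Fin m) :
    ¬ WinsWithin2 ((F'Graph s q m).deleteEdges {s((vx : F'Vert s q m), vH k)}) := by
  refine staller hs hm _ vv vx (vab 0) (by simp) (by simp) (by simp) ?_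
  intro d₁ d₂ h1 h2 h12 hdom
  have hkill : ∀ i' : Fin 2,
      ¬ Dominating ((F'Graph s q m).deleteEdges {s((vx : F'Vert s q m), vH k)})
      {vab i', vx} := by
    intro i'
    exact not_dom_pair (by simp) (by simp) (not_adj_del₁ (not_adj_ab_H i' k))
      (not_adj_del₂ rfl)
  rcases pairChar hs hm (dom_mono hdom) with hS | hS <;>
    rcases hS with ⟨i', rfl, rfl⟩ | ⟨rfl, rfl⟩ | ⟨rfl, k', rfl, hcond⟩
  · exact absurd hdom (hkill i')
  · exact absurd rfl h1
  · exact absurd rfl h1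
  · rw [Set.pair_comm] at hdom
    exact absurd hdom (hkill i')
  · exact absurd rfl h2
  · exact absurd rfl h2

lemma crit_xab (hs : 2 ≤ s) (hm : 2 ≤ m) (i : Fin 2) :
    ¬ WinsWithin2 ((F'Graph s q m).deleteEdges {s((vx : F'Vert s q m), vab i)}) := by
  refine staller hs hm _ vv vx (vab i) (by simp) (by simp) (by simp) ?_
  intro d₁ d₂ h1 h2 h12 hdom
  have hkill : ∀ i' : Fin 2, i' ≠ i →
      ¬ Dominating ((F'Graph s q m).deleteEdges {s((vx : F'Vert s q m), vab i)})
      {vab i', vx} := by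
    intro i' hii
    refine not_dom_pair (p₁ := (vab i' : F'Vert s q m)) (p₂ := vx) (w := vab i)
      (by rw [Ne, vab_inj]; exact hii.symm) (by simp)
      (not_adj_del₁ (not_adj_ab_ab i' i)) (not_adj_del₂ rfl)
  rcases pairChar hs hm (dom_mono hdom) with hS | hS <;>
    rcases hS with ⟨i', rfl, rfl⟩ | ⟨rfl, rfl⟩ | ⟨rfl, k', rfl, hcond⟩
  · by_cases hii : i' = i
    · subst hii; exact Or.inr ⟨rfl, rfl⟩
    · exact absurd hdom (hkill i' hii)
  · exact absurd rfl h1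
  · exact absurd rfl h1
  · by_cases hii : i' = i
    · subst hii; exact Or.inl ⟨rfl, rfl⟩
    · rw [Set.pair_comm] at hdom
      exact absurd hdom (hkill i' hii)
  · exact absurd rfl h2
  · exact absurd rfl h2

lemma crit_xB (hs : 2 ≤ s) (hm : 2 ≤ m) (j : Fin (q - 2)) :
    ¬ WinsWithin2 ((F'Graph s q m).deleteEdges {s((vx : F'Vert s q m), vB j)}) := by
  refine staller hs hm _ vv vx (vab 0) (by simp) (by simp) (by simp) ?_
  intro d₁ d₂ h1 h2 h12 hdom
  have hkill : ∀ i' : Fin 2,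
      ¬ Dominating ((F'Graph s q m).deleteEdges {s((vx : F'Vert s q m), vB j)})
      {vab i', vx} := by
    intro i'
    exact not_dom_pair (by simp) (by simp) (not_adj_del₁ (not_adj_ab_B i' j))
      (not_adj_del₂ rfl)
  rcases pairChar hs hm (dom_mono hdom) with hS | hS <;>
    rcases hS with ⟨i', rfl, rfl⟩ | ⟨rfl, rfl⟩ | ⟨rfl, k', rfl, hcond⟩
  · exact absurd hdom (hkill i')
  · exact absurd rfl h1
  · exact absurd rfl h1
  · rw [Set.pair_comm] at hdom
    exact absurd hdom (hkill i')
  · exact absurd rfl h2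
  · exact absurd rfl h2

end F'Crit

theorem stmt4 (s q m : ℕ) (hs : 2 ≤ s) (hq : 2 ≤ q) (hm : 2 ≤ m) :
    Critical2 (F'Graph s q m) := by
  refine ⟨⟨F'Crit.win2 hm, F'Crit.notWin1 hs hm⟩, ?_⟩
  intro u v huv
  rcases u with (i | j | j) | (⟨⟩ | k | ⟨⟩) <;> rcases v with (i' | j' | j') | (⟨⟩ | k' | ⟨⟩)
  -- u = ab i
  · exact absurd huv (by simp [F'Graph, SimpleGraph.fromRel_adj])
  · exact F'Crit.crit_abA hs hm i j'
  · exact absurd huv (by simp [F'Graph, SimpleGraph.fromRel_adj])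
  · rw [Sym2.eq_swap]; exact F'Crit.crit_vinl hs hm (.inl i)
  · exact absurd huv (by simp [F'Graph, SimpleGraph.fromRel_adj])
  · rw [Sym2.eq_swap]; exact F'Crit.crit_xab hs hm i
  -- u = A j
  · rw [Sym2.eq_swap]; exact F'Crit.crit_abA hs hm i' j
  · exact absurd huv (by simp [F'Graph, SimpleGraph.fromRel_adj])
  · exact absurd huv (by simp [F'Graph, SimpleGraph.fromRel_adj])
  · rw [Sym2.eq_swap]; exact F'Crit.crit_vinl hs hm (.inr (.inl j))
  · exact absurd huv (by simp [F'Graph, SimpleGraph.fromRel_adj])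
  · exact absurd huv (by simp [F'Graph, SimpleGraph.fromRel_adj])
  -- u = B j
  · exact absurd huv (by simp [F'Graph, SimpleGraph.fromRel_adj])
  · exact absurd huv (by simp [F'Graph, SimpleGraph.fromRel_adj])
  · exact absurd huv (by simp [F'Graph, SimpleGraph.fromRel_adj])
  · rw [Sym2.eq_swap]; exact F'Crit.crit_vinl hs hm (.inr (.inr j))
  · exact absurd huv (by simp [F'Graph, SimpleGraph.fromRel_adj])
  · rw [Sym2.eq_swap]; exact F'Crit.crit_xB hs hm j
  -- u = vv
  · exact F'Crit.crit_vinl hs hm (.inl i')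
  · exact F'Crit.crit_vinl hs hm (.inr (.inl j'))
  · exact F'Crit.crit_vinl hs hm (.inr (.inr j'))
  · exact absurd huv (by simp [F'Graph, SimpleGraph.fromRel_adj])
  · exact absurd huv (by simp [F'Graph, SimpleGraph.fromRel_adj])
  · exact absurd huv (by simp [F'Graph, SimpleGraph.fromRel_adj])
  -- u = H k
  · exact absurd huv (by simp [F'Graph, SimpleGraph.fromRel_adj])
  · exact absurd huv (by simp [F'Graph, SimpleGraph.fromRel_adj])
  · exact absurd huv (by simp [F'Graph, SimpleGraph.fromRel_adj])
  · exact absurd huv (by simp [F'Graph, SimpleGraph.fromRel_adj])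
  · rw [F'Crit.adj_H_iff] at huv
    obtain ⟨hne, hlt⟩ := huv
    rcases hlt with h | h
    · exact F'Crit.crit_HH hs hm k k' h hne
    · rw [Sym2.eq_swap]; exact F'Crit.crit_HH hs hm k' k h hne.symm
  · rw [Sym2.eq_swap]; exact F'Crit.crit_xH hs hm k
  -- u = x
  · exact F'Crit.crit_xab hs hm i'
  · exact absurd huv (by simp [F'Graph, SimpleGraph.fromRel_adj])
  · exact F'Crit.crit_xB hs hm j'
  · exact absurd huv (by simp [F'Graph, SimpleGraph.fromRel_adj])
  · exact F'Crit.crit_xH hs hm k'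
  · exact absurd huv (by simp [F'Graph, SimpleGraph.fromRel_adj])
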